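/- (Nonnegative covariance of marginal contributions for symmetric convex games.) Let g, h : ℕ → ℝ be functions whose increments are nonnegative and nondecreasing, i.e., g(k+1) − g(k) ≥ 0 and g(k+1) − g(k) ≤ g(k+2) − g(k+1) for all k, and similarly for h. Define the games G(S) = g(|S|) and H(S) = h(|S|) on N players. Then for every player i, the covariance of the marginal contributions under the Shapley distribution is nonnegative: Σ_{S ⊆ A\{i}} p_i(S)·d_iG(S)·d_iH(S) ≥ (Σ_{S ⊆ A\{i}} p_i(S)·d_iG(S)) · (Σ_{S ⊆ A\{i}} p_i(S)·d_iH(S)). -/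

import Mathlib

open Finset

noncomputable def shapleyWeight (N : ℕ) (S : Finset (Fin N)) : ℝ :=
  ((Nat.factorial S.card : ℝ) * (Nat.factorial (N - S.card - 1) : ℝ)) / (Nat.factorial N : ℝ)

noncomputable def marginal (N : ℕ) (G : Finset (Fin N) → ℝ) (i : Fin N)
    (S : Finset (Fin N)) : ℝ :=
  G (insert i S) - G S

noncomputable def shapleyValue (N : ℕ) (G : Finset (Fin N) → ℝ) (i : Fin N) : ℝ :=
  ∑ S ∈ (Finset.univ.erase i).powerset, shapleyWeight N S * marginal N G i S

noncomputable def shapleyUncertainty (N : ℕ) (G : Finset (Fin N) → ℝ) (i : Fin N) : ℝ :=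
  ∑ S ∈ (Finset.univ.erase i).powerset,
    shapleyWeight N S * (marginal N G i S - shapleyValue N G i) ^ 2

lemma shapleyWeight_nonneg (N : ℕ) (S : Finset (Fin N)) : 0 ≤ shapleyWeight N S := by
  unfold shapleyWeight; positivity

lemma shapleyWeight_sum_one (N : ℕ) (hN : 1 ≤ N) (i : Fin N) :
    ∑ S ∈ (Finset.univ.erase i).powerset, shapleyWeight N S = 1 := by
  have hc : (Finset.univ.erase i).card = N - 1 := by
    rw [card_erase_of_mem (mem_univ i), card_univ, Fintype.card_fin]
  rw [show ∑ S ∈ (Finset.univ.erase i).powerset, shapleyWeight N S = ∑ k ∈ Finset.range ((Finset.univ.erase i).card + 1), ∑ S ∈ powersetCard k (Finset.univ.erase i), shapleyWeight N S from by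
    rw [powerset_card_disjiUnion]; exact sum_disjiUnion _ _ _]
  have hterm : ∀ k ∈ Finset.range ((Finset.univ.erase i).card + 1),
      ∑ S ∈ powersetCard k (Finset.univ.erase i), shapleyWeight N S = (N : ℝ)⁻¹ := by
    intro k hk
    rw [Finset.mem_range, hc, Nat.lt_succ_iff] at hk
    have hconst : ∀ S ∈ powersetCard k (Finset.univ.erase i),
        shapleyWeight N S =
          ((Nat.factorial k : ℝ) * (Nat.factorial (N - k - 1) : ℝ)) / (Nat.factorial N : ℝ) := by
      intro S hS
      have := (Finset.mem_powersetCard.1 hS).2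
      simp [shapleyWeight, this]
    rw [Finset.sum_congr rfl hconst, Finset.sum_const, Finset.card_powersetCard, hc,
      nsmul_eq_mul]
    have h1 : N - k - 1 = (N - 1) - k := by omega
    have h2 : ((N-1).choose k : ℝ) * ((Nat.factorial k : ℝ) * (Nat.factorial ((N-1) - k) : ℝ))
        = (Nat.factorial (N - 1) : ℝ) := by
      rw [← Nat.cast_mul, ← Nat.cast_mul, ← mul_assoc]
      exact_mod_cast congrArg (Nat.cast (R := ℝ)) (Nat.choose_mul_factorial_mul_factorial hk)
    have hfac : (Nat.factorial N : ℝ) = (N : ℝ) * (Nat.factorial (N - 1) : ℝ) := by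
      have hN' : N = (N - 1) + 1 := by omega
      rw [hN', Nat.factorial_succ]; push_cast; ring_nf
    have hpos : (Nat.factorial (N - 1) : ℝ) ≠ 0 := by
      exact_mod_cast (Nat.factorial_pos (N - 1)).ne'
    have hNne : (N : ℝ) ≠ 0 := by positivity
    rw [h1, ← mul_div_assoc, h2, hfac]
    field_simp
  rw [Finset.sum_congr rfl hterm, Finset.sum_const, hc, nsmul_eq_mul]
  have : (N - 1) + 1 = N := by omega
  rw [this]
  field_simp
  simp

lemma weighted_cov_nonneg {α : Type*} (s : Finset α) (w f g : α → ℝ)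
    (hw : ∀ a ∈ s, 0 ≤ w a) (hw1 : ∑ a ∈ s, w a = 1)
    (hfg : ∀ a ∈ s, ∀ b ∈ s, 0 ≤ (f a - f b) * (g a - g b)) :
    (∑ a ∈ s, w a * f a) * (∑ a ∈ s, w a * g a) ≤ ∑ a ∈ s, w a * (f a * g a) := by
  have key : 0 ≤ ∑ a ∈ s, ∑ b ∈ s, w a * w b * ((f a - f b) * (g a - g b)) :=
    Finset.sum_nonneg fun a ha => Finset.sum_nonneg fun b hb =>
      mul_nonneg (mul_nonneg (hw a ha) (hw b hb)) (hfg a ha b hb)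
  have expand : ∑ a ∈ s, ∑ b ∈ s, w a * w b * ((f a - f b) * (g a - g b))
      = (∑ a ∈ s, w a * (f a * g a)) * (∑ b ∈ s, w b)
        + (∑ a ∈ s, w a) * (∑ b ∈ s, w b * (f b * g b))
        - (∑ a ∈ s, w a * f a) * (∑ b ∈ s, w b * g b)
        - (∑ a ∈ s, w a * g a) * (∑ b ∈ s, w b * f b) := by
    rw [Finset.sum_mul_sum, Finset.sum_mul_sum, Finset.sum_mul_sum, Finset.sum_mul_sum,
      ← Finset.sum_add_distrib, ← Finset.sum_sub_distrib, ← Finset.sum_sub_distrib]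
    refine Finset.sum_congr rfl fun a _ => ?_
    rw [← Finset.sum_add_distrib, ← Finset.sum_sub_distrib, ← Finset.sum_sub_distrib]
    exact Finset.sum_congr rfl fun b _ => by ring
  rw [expand, hw1] at key
  nlinarith [key]

theorem shapley_covariance_nonneg_symmetric_convex (N : ℕ) (hN : 1 ≤ N)
    (g h : ℕ → ℝ)
    (hg0 : ∀ k, 0 ≤ g (k + 1) - g k)
    (hgconv : ∀ k, g (k + 1) - g k ≤ g (k + 2) - g (k + 1))
    (hh0 : ∀ k, 0 ≤ h (k + 1) - h k)
    (hhconv : ∀ k, h (k + 1) - h k ≤ h (k + 2) - h (k + 1))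
    (i : Fin N) :
    ∑ S ∈ (Finset.univ.erase i).powerset,
        shapleyWeight N S * (marginal N (fun S => g S.card) i S *
          marginal N (fun S => h S.card) i S) ≥
      (∑ S ∈ (Finset.univ.erase i).powerset,
          shapleyWeight N S * marginal N (fun S => g S.card) i S) *
        (∑ S ∈ (Finset.univ.erase i).powerset,
          shapleyWeight N S * marginal N (fun S => h S.card) i S) := by
  set dg : ℕ → ℝ := fun k => g (k + 1) - g k with hdg
  set dh : ℕ → ℝ := fun k => h (k + 1) - h k with hdh
  have hdgm : Monotone dg := monotone_nat_of_le_succ fun k => hgconv k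
  have hdhm : Monotone dh := monotone_nat_of_le_succ fun k => hhconv k
  have hmarg : ∀ S ∈ (Finset.univ.erase i).powerset,
      marginal N (fun S => g S.card) i S = dg S.card ∧
      marginal N (fun S => h S.card) i S = dh S.card := by
    intro S hS
    have hiS : i ∉ S := fun hi =>
      (Finset.notMem_erase i Finset.univ) (Finset.mem_powerset.1 hS hi)
    have : (insert i S).card = S.card + 1 := Finset.card_insert_of_notMem hiS
    constructor <;> simp [marginal, this, hdg, hdh]
  have key := weighted_cov_nonneg (Finset.univ.erase i).powerset (shapleyWeight N)
    (fun S => dg S.card) (fun S => dh S.card)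
    (fun S _ => shapleyWeight_nonneg N S) (shapleyWeight_sum_one N hN i)
    (fun S _ T _ => by
      rcases le_total S.card T.card with hle | hle
      · nlinarith [hdgm hle, hdhm hle]
      · nlinarith [hdgm hle, hdhm hle])
  have e1 : ∑ S ∈ (Finset.univ.erase i).powerset,
      shapleyWeight N S * marginal N (fun S => g S.card) i S
      = ∑ S ∈ (Finset.univ.erase i).powerset, shapleyWeight N S * dg S.card :=
    Finset.sum_congr rfl fun S hS => by rw [(hmarg S hS).1]
  have e2 : ∑ S ∈ (Finset.univ.erase i).powerset,
      shapleyWeight N S * marginal N (fun S => h S.card) i S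
      = ∑ S ∈ (Finset.univ.erase i).powerset, shapleyWeight N S * dh S.card :=
    Finset.sum_congr rfl fun S hS => by rw [(hmarg S hS).2]
  have e3 : ∑ S ∈ (Finset.univ.erase i).powerset,
      shapleyWeight N S * (marginal N (fun S => g S.card) i S *
        marginal N (fun S => h S.card) i S)
      = ∑ S ∈ (Finset.univ.erase i).powerset,
        shapleyWeight N S * (dg S.card * dh S.card) :=
    Finset.sum_congr rfl fun S hS => by rw [(hmarg S hS).1, (hmarg S hS).2]
  rw [ge_iff_le, e1, e2, e3]
  exact key
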